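/- arXiv:1702.00297 — 4 statements merged into one kernel-verified Lean document; each statement's English description precedes it below -/
import Mathlib

section
/- Let s > 1, 0 < δ < 1/4, q_δ(x) = q(x/δ)/δ for a smooth even nonnegative bump q supported in [-1,1] with unit mass, and let g_{s±δ}(x) = 2 sinh(|x|/2)·1_{[0,s±δ]}(|x|). Define g_± = g_{s±δ} * q_δ (convolution). Then there is an absolute constant C (depending only on q) such that for all x ≥ 0: g_-(x) − C δ e^{x/2} 1_{[0,s]}(x) ≤ g_s(x) ≤ g_+(x) + C δ e^{x/2} 1_{[0,s]}(x). -/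
open MeasureTheory

lemma sinh_pert (x δ : ℝ) (hx : 0 ≤ x) (hδ : 0 < δ) (hδ4 : δ < 1/4) :
    2*Real.sinh ((x+δ)/2) ≤ 2*Real.sinh (x/2) + 2*δ*Real.exp (x/2) ∧
    2*Real.sinh (x/2) ≤ 2*Real.sinh ((x-δ)/2) + 2*δ*Real.exp (x/2) := by
  have h1 : (x+δ)/2 = x/2 + δ/2 := by ring
  have h2 : (x-δ)/2 = x/2 + (-(δ/2)) := by ring
  rw [Real.sinh_eq, Real.sinh_eq, Real.sinh_eq, h1, h2]
  simp only [neg_add, neg_neg, Real.exp_add, Real.exp_neg]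
  set a := Real.exp (x/2) with ha
  set b := Real.exp (δ/2) with hb
  have ha1 : 1 ≤ a := Real.one_le_exp (by linarith)
  have hbpos : 0 < b := Real.exp_pos _
  have hapos : (0:ℝ) < a := by linarith
  have hb1 : 1 + δ/2 ≤ b := by have := Real.add_one_le_exp (δ/2); linarith
  have hb2 : 1 - δ/2 ≤ b⁻¹ := by
    have := Real.add_one_le_exp (-(δ/2))
    rw [Real.exp_neg, ← hb] at this; linarith
  have hb3 : b ≤ 3 := by
    have h : b ≤ Real.exp 1 := Real.exp_le_exp.mpr (by linarith)
    have := Real.exp_one_lt_d9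
    linarith
  have hbm : b * b⁻¹ = 1 := mul_inv_cancel₀ (ne_of_gt hbpos)
  have ham : a * a⁻¹ = 1 := mul_inv_cancel₀ (ne_of_gt hapos)
  have hia1 : a⁻¹ ≤ 1 := by rw [inv_le_one_iff₀]; right; exact ha1
  have hiapos : (0:ℝ) < a⁻¹ := by positivity
  have hibpos : (0:ℝ) < b⁻¹ := by positivity
  have hib1 : b⁻¹ ≤ 1 := by rw [inv_le_one_iff₀]; right; linarith
  constructor
  · -- a*b - a⁻¹*b⁻¹ ≤ a - a⁻¹ + 2δa
    -- a(b-1) ≤ 1.5 δ a ; a⁻¹(1 - b⁻¹) ≤ δ/2 ≤ δ/2 * a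
    have k1 : a * (b - 1) ≤ a * (3*δ/2) := by
      apply mul_le_mul_of_nonneg_left _ hapos.le
      nlinarith
    have k2 : a⁻¹ * (1 - b⁻¹) ≤ δ/2 := by
      nlinarith
    nlinarith
  · have k1 : a * (1 - b⁻¹) ≤ a * (δ/2) := by
      apply mul_le_mul_of_nonneg_left _ hapos.le
      nlinarith
    have k2 : a⁻¹ * (b - 1) ≤ 3*δ/2 := by nlinarith
    nlinarith

theorem stmt_3 (q : ℝ → ℝ) (hsmooth : ContDiff ℝ (⊤ : ℕ∞) q) (heven : ∀ x, q (-x) = q x)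
    (hnonneg : ∀ x, 0 ≤ q x) (hsupp : ∀ x, q x ≠ 0 → |x| ≤ 1)
    (hmass : ∫ x : ℝ, q x = 1) :
    ∃ C > 0, ∀ s δ : ℝ, 1 < s → 0 < δ → δ < 1/4 →
      ∀ gp gm : ℝ → ℝ,
      (∀ x, gp x = ∫ y : ℝ, (if |x - y| ≤ s + δ then 2 * Real.sinh (|x - y|/2) else 0) * (q (y/δ)/δ)) →
      (∀ x, gm x = ∫ y : ℝ, (if |x - y| ≤ s - δ then 2 * Real.sinh (|x - y|/2) else 0) * (q (y/δ)/δ)) →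
      ∀ x : ℝ, 0 ≤ x →
        gm x - C * δ * Real.exp (x/2) * (if x ≤ s then 1 else 0)
            ≤ (if x ≤ s then 2 * Real.sinh (x/2) else 0) ∧
        (if x ≤ s then 2 * Real.sinh (x/2) else 0)
            ≤ gp x + C * δ * Real.exp (x/2) * (if x ≤ s then 1 else 0) := by
  have hq_int : Integrable q := by
    by_contra h
    rw [integral_undef h] at hmass
    norm_num at hmass
  refine ⟨2, by norm_num, ?_⟩
  intro s δ hs hδ hδ4 gp gm hgp hgm x hx
  have hδne : δ ≠ 0 := ne_of_gt hδ
  have hqδ_int : Integrable (fun y => q (y/δ)/δ) := (hq_int.comp_div hδne).div_const δ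
  have hqδ_nonneg : ∀ y : ℝ, 0 ≤ q (y/δ)/δ := fun y => div_nonneg (hnonneg _) hδ.le
  have hqδ_mass : (∫ y : ℝ, q (y/δ)/δ) = 1 := by
    have : (∫ y : ℝ, q (y/δ)) = |δ| • ∫ y : ℝ, q y := MeasureTheory.Measure.integral_comp_div q δ
    rw [integral_div, this, hmass, abs_of_pos hδ, smul_eq_mul, mul_one, div_self hδne]
  have hqδ_small : ∀ y : ℝ, q (y/δ) ≠ 0 → |y| ≤ δ := by
    intro y hy
    have := hsupp _ hy
    rw [abs_div, abs_of_pos hδ, div_le_one hδ] at this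
    exact this
  -- measurability and integrability of integrands
  have hmeas : ∀ t : ℝ, AEStronglyMeasurable
      (fun y => (if |x - y| ≤ t then 2 * Real.sinh (|x - y|/2) else 0) * (q (y/δ)/δ)) volume := by
    intro t
    apply AEStronglyMeasurable.mul
    · apply Measurable.aestronglyMeasurable
      apply Measurable.ite
      · exact (isClosed_le ((continuous_const.sub continuous_id).abs) continuous_const).measurableSet
      · exact (continuous_const.mul (Real.continuous_sinh.comp (((continuous_const.sub continuous_id).abs).div_const 2))).measurable
      · exact measurable_const
    · exact ((hsmooth.continuous.comp (continuous_id.div_const δ)).div_const δ).measurable.aestronglyMeasurable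
  have hint : ∀ t : ℝ, t ≤ s + δ → Integrable
      (fun y => (if |x - y| ≤ t then 2 * Real.sinh (|x - y|/2) else 0) * (q (y/δ)/δ)) := by
    intro t ht
    apply Integrable.mono' (hqδ_int.const_mul (2 * Real.sinh ((s+δ)/2))) (hmeas t)
    filter_upwards with y
    have hqy := hqδ_nonneg y
    by_cases hc : |x - y| ≤ t
    · rw [if_pos hc, Real.norm_eq_abs, abs_mul, abs_of_nonneg hqy,
        abs_of_nonneg (by positivity : (0:ℝ) ≤ 2 * Real.sinh (|x - y|/2))]
      apply mul_le_mul_of_nonneg_right _ hqy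
      have : |x - y|/2 ≤ (s+δ)/2 := by linarith
      nlinarith [Real.sinh_le_sinh.mpr this]
    · rw [if_neg hc]
      simp only [zero_mul, norm_zero]
      have : (0:ℝ) ≤ Real.sinh ((s+δ)/2) := by
        rw [Real.sinh_nonneg_iff]; linarith
      positivity
  by_cases hxs : x ≤ s
  · simp only [if_pos hxs, mul_one]
    have hconst : ∀ c : ℝ, (∫ y : ℝ, 2 * Real.sinh c * (q (y/δ)/δ)) = 2 * Real.sinh c := by
      intro c
      rw [integral_const_mul, hqδ_mass, mul_one]
    constructor
    · -- gm x ≤ 2 sinh((x+δ)/2) ≤ 2 sinh(x/2) + 2δe^{x/2}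
      have hub : gm x ≤ 2 * Real.sinh ((x+δ)/2) := by
        rw [hgm, ← hconst ((x+δ)/2)]
        apply integral_mono (hint (s - δ) (by linarith)) (hqδ_int.const_mul _)
        intro y
        dsimp only
        have hqy := hqδ_nonneg y
        by_cases hq0 : q (y/δ) = 0
        · simp [hq0]
        · have hy : |y| ≤ δ := hqδ_small y hq0
          have hle : |x - y| ≤ x + δ := by
            rcases abs_le.mp hy with ⟨h1, h2⟩
            rw [abs_le]; constructor <;> linarith
          by_cases hc : |x - y| ≤ s - δ
          · rw [if_pos hc]
            apply mul_le_mul_of_nonneg_right _ hqy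
            have : |x - y|/2 ≤ (x+δ)/2 := by linarith
            nlinarith [Real.sinh_le_sinh.mpr this]
          · rw [if_neg hc]
            apply mul_le_mul_of_nonneg_right _ hqy
            have : (0:ℝ) ≤ Real.sinh ((x+δ)/2) := by
              rw [Real.sinh_nonneg_iff]; linarith
            nlinarith
      have := (sinh_pert x δ hx hδ hδ4).1
      linarith
    · -- 2 sinh(x/2) ≤ 2 sinh((x-δ)/2) + 2δe^{x/2} ≤ gp x + 2δe^{x/2}
      have hlb : 2 * Real.sinh ((x-δ)/2) ≤ gp x := by
        rw [hgp, ← hconst ((x-δ)/2)]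
        apply integral_mono (hqδ_int.const_mul _) (hint (s + δ) le_rfl)
        intro y
        dsimp only
        have hqy := hqδ_nonneg y
        by_cases hq0 : q (y/δ) = 0
        · simp [hq0]
        · have hy : |y| ≤ δ := hqδ_small y hq0
          rcases abs_le.mp hy with ⟨h1, h2⟩
          have hc : |x - y| ≤ s + δ := by
            rw [abs_le]; constructor <;> linarith
          rw [if_pos hc]
          apply mul_le_mul_of_nonneg_right _ hqy
          have hge : (x-δ)/2 ≤ |x - y|/2 := by
            have : x - δ ≤ |x - y| := by
              rcases le_or_gt (x - δ) 0 with h | h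
              · exact h.trans (abs_nonneg _)
              · calc x - δ ≤ x - y := by linarith
                  _ ≤ |x - y| := le_abs_self _
            linarith
          nlinarith [Real.sinh_le_sinh.mpr hge]
      have := (sinh_pert x δ hx hδ hδ4).2
      linarith
  · simp only [if_neg hxs, mul_zero]
    have hxgt : s < x := not_le.mp hxs
    constructor
    · -- gm x = 0
      have : gm x = 0 := by
        rw [hgm]
        have hz : ∀ y : ℝ, (if |x - y| ≤ s - δ then 2 * Real.sinh (|x - y|/2) else 0) * (q (y/δ)/δ) = 0 := by
          intro y
          by_cases hq0 : q (y/δ) = 0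
          · simp [hq0]
          · have hy : |y| ≤ δ := hqδ_small y hq0
            rcases abs_le.mp hy with ⟨h1, h2⟩
            have hc : ¬ |x - y| ≤ s - δ := by
              push_neg
              calc s - δ < x - δ := by linarith
                _ ≤ x - y := by linarith
                _ ≤ |x - y| := le_abs_self _
            rw [if_neg hc, zero_mul]
        simp only [hz, integral_zero]
      linarith
    · -- 0 ≤ gp x
      have : 0 ≤ gp x := by
        rw [hgp]
        apply integral_nonneg
        intro y
        apply mul_nonneg _ (hqδ_nonneg y)
        by_cases hc : |x - y| ≤ s + δ
        · rw [if_pos hc]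
          have : (0:ℝ) ≤ Real.sinh (|x - y|/2) := by
            rw [Real.sinh_nonneg_iff]; positivity
          linarith
        · rw [if_neg hc]
      linarith
end

section
/- With φ_{X,T} as above and z₁ ≠ z₂ positive reals, |(1/A) ∫_A^{2A} φ_{X,T}(z₁) · conj(φ_{X,T}(z₂)) dX| ≤ C z₁ z₂ A^{1/2} / |z₁ − z₂| for an absolute constant C. -/
/-! Write β = u + it with u = log X / 2 and t = 1 / (2T). Then
φ(z₁) · conj φ(z₂) = (z₁z₂/π²) (sinh² u + sin² t) e^{-(z₁+z₂) sin t sinh u} e^{iμ cosh u}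
with μ = (z₁ − z₂) cos t, and since d/dX e^{iμ cosh u} = iμ (sinh u / 2X) e^{iμ cosh u},
the integrand is (2z₁z₂ / (iμπ²)) ρ(X) · d/dX e^{iμ cosh u} for the real amplitude
ρ(X) = X (sinh u + sin² t / sinh u) e^{-(z₁+z₂) sin t sinh u}.
On [A, 2A] we have ρ = O(A^{3/2}) and ρ' = O(A^{1/2}) (the exponential factor is harmless
because y e^{-y} ≤ 1), so one integration by parts bounds the integral by O(A^{3/2} / |μ|),
and |μ| ≥ |z₁ − z₂| / 2 because 0 < t ≤ 1. -/

open MeasureTheory Set Complex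

theorem norm_integral_mul_deriv_le {E : Type*} [NormedRing E] [NormedAlgebra ℝ E] [CompleteSpace E]
    {f f' g g' : ℝ → E} {a b M M' : ℝ} (hab : a ≤ b)
    (hf : ∀ x ∈ Icc a b, HasDerivAt f (f' x) x) (hg : ∀ x ∈ Icc a b, HasDerivAt g (g' x) x)
    (hf' : IntervalIntegrable f' volume a b) (hg' : IntervalIntegrable g' volume a b)
    (hfM : ∀ x ∈ Icc a b, ‖f x‖ ≤ M) (hf'M : ∀ x ∈ Icc a b, ‖f' x‖ ≤ M')
    (hg1 : ∀ x ∈ Icc a b, ‖g x‖ ≤ 1) :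
    ‖∫ x in a..b, f x * g' x‖ ≤ 2 * M + M' * (b - a) := by
  rw [← uIcc_of_le hab] at hf hg
  rw [intervalIntegral.integral_mul_deriv_eq_deriv_mul hf hg hf' hg']
  have hfg : ∀ x ∈ Icc a b, ‖f x * g x‖ ≤ M := fun x hx =>
    mul_one M ▸ norm_mul_le_of_le (hfM x hx) (hg1 x hx)
  have hint : ‖∫ x in a..b, f' x * g x‖ ≤ M' * (b - a) := by
    rw [← abs_of_nonneg (sub_nonneg.2 hab)]
    refine intervalIntegral.norm_integral_le_of_norm_le_const fun x hx => ?_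
    have hx : x ∈ Icc a b := Ioc_subset_Icc_self (uIoc_of_le hab ▸ hx)
    exact mul_one M' ▸ norm_mul_le_of_le (hf'M x hx) (hg1 x hx)
  calc _ ≤ ‖f b * g b‖ + ‖f a * g a‖ + ‖∫ x in a..b, f' x * g x‖ :=
        (norm_sub_le _ _).trans (add_le_add_left (norm_sub_le _ _) _)
    _ ≤ M + M + M' * (b - a) :=
        add_le_add (add_le_add (hfg b ⟨hab, le_rfl⟩) (hfg a ⟨le_rfl, hab⟩)) hint
    _ = 2 * M + M' * (b - a) := by ring

theorem sinh_mul_exp_mul_conj (u t z w : ℝ) :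
    sinh (u + t * I) * z * exp (I * z * cosh (u + t * I)) *
        starRingEnd ℂ (sinh (u + t * I) * w * exp (I * w * cosh (u + t * I))) =
      ((z * w * (Real.sinh u ^ 2 + Real.sin t ^ 2) *
          Real.exp (-((z + w) * Real.sin t * Real.sinh u)) : ℝ) : ℂ) *
        exp (I * ((z - w) * Real.cos t : ℝ) * (Real.cosh u : ℂ)) := by
  have hconj : starRingEnd ℂ (u + t * I) = u + (-t : ℝ) * I := by
    simp [conj_ofReal, conj_I]
  simp only [map_mul, ← sinh_conj, ← cosh_conj, ← exp_conj, hconj, conj_ofReal, conj_I]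
  push_cast
  simp only [sinh_add, cosh_add, sinh_mul_I, cosh_mul_I, sin_neg, cos_neg]
  set E := exp (I * z * (cosh u * cos t + sinh u * (sin t * I))) *
      exp (-I * w * (cosh u * cos t + sinh u * (-sin t * I))) with hE
  set F := exp (-((z + w) * sin t * sinh u)) * exp (I * ((z - w) * cos t) * cosh u) with hF
  have hEF : E = F := by
    rw [hE, hF, ← exp_add, ← exp_add]
    congr 1
    linear_combination ((z:ℂ) + w) * sinh u * sin t * I_sq
  linear_combination (z * w * (sinh u * cos t + cosh u * (sin t * I)) *
      (sinh u * cos t + cosh u * (-sin t * I)) : ℂ) * hEF +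
    z * w * F * (sin t ^ 2 * cosh_sq_sub_sinh_sq (u : ℂ) + sinh u ^ 2 * sin_sq_add_cos_sq (t : ℂ)
      - cosh u ^ 2 * sin t ^ 2 * I_sq)

theorem abs_le_two_mul_abs_mul_cos {x t : ℝ} (ht : |t| ≤ 1) : |x| ≤ 2 * |x * Real.cos t| := by
  have ht2 : t ^ 2 ≤ 1 := by nlinarith [sq_abs t, abs_nonneg t]
  have hcos : 1 / 2 ≤ Real.cos t := by linarith [Real.one_sub_sq_div_two_le_cos (x := t)]
  rw [abs_mul, abs_of_pos (by linarith : 0 < Real.cos t)]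
  nlinarith [abs_nonneg x]

theorem norm_two_mul_mul_div_I_mul_pi_sq_le {z w μ : ℝ} (hz : 0 < z) (hw : 0 < w) (hzw : z ≠ w)
    (hμ : |z - w| ≤ 2 * |μ|) : ‖2 * z * w / (I * μ * (Real.pi : ℂ) ^ 2)‖ ≤ z * w / |z - w| := by
  have hπ : 4 ≤ Real.pi ^ 2 := by nlinarith [Real.pi_gt_three]
  have hzw' : 0 < |z - w| := abs_pos.2 (sub_ne_zero.2 hzw)
  have hμ' : 0 < |μ| := by linarith
  simp only [norm_div, norm_mul, norm_pow, norm_I, norm_real, Real.norm_eq_abs,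
    Complex.norm_ofNat, one_mul, abs_of_pos hz, abs_of_pos hw, abs_of_pos Real.pi_pos]
  rw [div_le_div_iff₀ (by positivity) hzw']
  nlinarith [mul_pos hz hw, mul_le_mul hμ hπ (by norm_num) (by positivity)]

theorem sinh_half_log_pos {X : ℝ} (hX : 1 < X) : 0 < Real.sinh (Real.log X / 2) :=
  Real.sinh_pos_iff.2 (by linarith [Real.log_pos hX])

theorem hasDerivAt_sinh_half_log {X : ℝ} (hX : X ≠ 0) :
    HasDerivAt (fun X => Real.sinh (Real.log X / 2))
      (Real.cosh (Real.log X / 2) * (X⁻¹ / 2)) X :=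
  (Real.hasDerivAt_sinh _).comp X ((Real.hasDerivAt_log hX).div_const 2)

theorem exp_half_log {X : ℝ} (hX : 0 < X) : Real.exp (Real.log X / 2) = √X := by
  rw [Real.exp_half, Real.exp_log hX]

theorem sqrt_div_four_le_sinh_half_log {X : ℝ} (hX : 2 ≤ X) :
    √X / 4 ≤ Real.sinh (Real.log X / 2) := by
  have hr : 0 < √X := Real.sqrt_pos.2 (by linarith)
  have hr2 : √X ^ 2 = X := Real.sq_sqrt (by linarith)
  have hinv : (√X)⁻¹ ≤ √X / 2 := by
    rw [inv_le_iff_one_le_mul₀ hr]; nlinarith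
  rw [Real.sinh_eq, Real.exp_neg, exp_half_log (by linarith)]
  linarith

theorem cosh_half_log_le_sqrt {X : ℝ} (hX : 1 ≤ X) : Real.cosh (Real.log X / 2) ≤ √X := by
  have hr : 0 < √X := Real.sqrt_pos.2 (by linarith)
  have hr2 : √X ^ 2 = X := Real.sq_sqrt (by linarith)
  have hinv : (√X)⁻¹ ≤ √X := by
    rw [inv_le_iff_one_le_mul₀ hr]; nlinarith
  rw [Real.cosh_eq, Real.exp_neg, exp_half_log (by linarith)]
  linarith

theorem inv_sinh_half_log_le {X : ℝ} (hX : 2 ≤ X) : (Real.sinh (Real.log X / 2))⁻¹ ≤ 2 * √X := by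
  have hS := sqrt_div_four_le_sinh_half_log hX
  have hr2 : √X ^ 2 = X := Real.sq_sqrt (by linarith)
  rw [inv_le_iff_one_le_mul₀ (sinh_half_log_pos (by linarith))]
  nlinarith [Real.sqrt_nonneg X]

theorem inv_sinh_half_log_sq_le {X : ℝ} (hX : 2 ≤ X) :
    (Real.sinh (Real.log X / 2) ^ 2)⁻¹ ≤ 8 := by
  have hS := sqrt_div_four_le_sinh_half_log hX
  have hr2 : √X ^ 2 = X := Real.sq_sqrt (by linarith)
  rw [inv_le_iff_one_le_mul₀ (pow_pos (sinh_half_log_pos (by linarith)) 2)]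
  nlinarith [Real.sqrt_nonneg X]

theorem sinh_half_log_add_div_le {a X : ℝ} (ha₀ : 0 ≤ a) (ha₁ : a ≤ 1) (hX : 2 ≤ X) :
    Real.sinh (Real.log X / 2) + a / Real.sinh (Real.log X / 2) ≤ 3 * √X := by
  have hS := sinh_half_log_pos (by linarith : 1 < X)
  have hSC := (Real.sinh_lt_cosh (Real.log X / 2)).le.trans (cosh_half_log_le_sqrt (by linarith))
  have hdiv : a / Real.sinh (Real.log X / 2) ≤ 2 * √X := by
    rw [div_eq_mul_inv]
    nlinarith [inv_sinh_half_log_le hX, inv_pos.2 hS]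
  linarith

namespace PhiCorrelation

noncomputable def amplitude (a κ X : ℝ) : ℝ :=
  X * (Real.sinh (Real.log X / 2) + a / Real.sinh (Real.log X / 2)) *
    Real.exp (-(κ * Real.sinh (Real.log X / 2)))

-- grouped so that the factor κ sinh u · e^{-κ sinh u} ≤ 1 appears on its own
noncomputable def amplitudeDeriv (a κ X : ℝ) : ℝ :=
  (Real.sinh (Real.log X / 2) + a / Real.sinh (Real.log X / 2)) *
      Real.exp (-(κ * Real.sinh (Real.log X / 2))) +
    Real.cosh (Real.log X / 2) / 2 *
      ((1 - a / Real.sinh (Real.log X / 2) ^ 2) * Real.exp (-(κ * Real.sinh (Real.log X / 2))) -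
        (1 + a / Real.sinh (Real.log X / 2) ^ 2) *
          (κ * Real.sinh (Real.log X / 2) * Real.exp (-(κ * Real.sinh (Real.log X / 2)))))

noncomputable def phase (μ X : ℝ) : ℂ := exp (I * μ * (Real.cosh (Real.log X / 2) : ℂ))

noncomputable def phaseDeriv (μ X : ℝ) : ℂ :=
  phase μ X * (I * μ * ((Real.sinh (Real.log X / 2) / (2 * X) : ℝ) : ℂ))

theorem hasDerivAt_amplitude (a κ : ℝ) {X : ℝ} (hX : 1 < X) :
    HasDerivAt (amplitude a κ) (amplitudeDeriv a κ X) X := by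
  have hX0 : X ≠ 0 := by positivity
  have hS := sinh_half_log_pos hX
  have hdS := hasDerivAt_sinh_half_log hX0
  have h := ((hasDerivAt_id' X).fun_mul
    (hdS.fun_add ((hasDerivAt_const X a).fun_div hdS hS.ne'))).fun_mul (hdS.const_mul κ).fun_neg.exp
  refine h.congr_deriv ?_
  simp only [amplitudeDeriv]
  field_simp
  ring

theorem hasDerivAt_phase (μ : ℝ) {X : ℝ} (hX : X ≠ 0) :
    HasDerivAt (phase μ) (phaseDeriv μ X) X := by
  have h := (((Real.hasDerivAt_cosh _).comp X ((Real.hasDerivAt_log hX).div_const 2)).ofReal_comp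
    |>.const_mul (I * μ)).cexp
  refine h.congr_deriv ?_
  simp only [phaseDeriv, phase, Function.comp_def]
  push_cast
  field_simp

theorem continuousOn_amplitudeDeriv (a κ : ℝ) : ContinuousOn (amplitudeDeriv a κ) (Ioi 1) := by
  intro X hX
  have hX0 : X ≠ 0 := (zero_lt_one.trans hX).ne'
  have hS := (sinh_half_log_pos hX).ne'
  have hS2 := pow_ne_zero 2 hS
  -- `fun_prop` knows no rules for `Real.sinh` and `Real.cosh`
  have hsinh := Real.continuous_sinh
  have hcosh := Real.continuous_cosh
  apply ContinuousAt.continuousWithinAt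
  unfold amplitudeDeriv
  fun_prop (disch := first | assumption | norm_num)

theorem continuousOn_phaseDeriv (μ : ℝ) : ContinuousOn (phaseDeriv μ) (Ioi 0) := by
  intro X hX
  have hX0 : X ≠ 0 := ne_of_gt hX
  have hX0' : 2 * X ≠ 0 := by positivity
  have hsinh := Real.continuous_sinh
  have hcosh := Real.continuous_cosh
  apply ContinuousAt.continuousWithinAt
  unfold phaseDeriv phase
  fun_prop (disch := assumption)

theorem norm_phase (μ X : ℝ) : ‖phase μ X‖ = 1 := by
  rw [phase, mul_assoc, ← ofReal_mul]
  exact norm_exp_I_mul_ofReal _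

theorem abs_amplitude_le {a κ X : ℝ} (ha₀ : 0 ≤ a) (ha₁ : a ≤ 1) (hκ : 0 ≤ κ) (hX : 2 ≤ X) :
    |amplitude a κ X| ≤ 3 * X * √X := by
  have hS := sinh_half_log_pos (by linarith : 1 < X)
  have he : Real.exp (-(κ * Real.sinh (Real.log X / 2))) ≤ 1 :=
    Real.exp_le_one_iff.2 (by nlinarith)
  rw [amplitude, abs_of_nonneg (by positivity), mul_assoc 3]
  calc _ ≤ X * (3 * √X) * 1 := by
        gcongr
        exact sinh_half_log_add_div_le ha₀ ha₁ hX
    _ = 3 * (X * √X) := by ring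

theorem abs_amplitudeDeriv_le {a κ X : ℝ} (ha₀ : 0 ≤ a) (ha₁ : a ≤ 1) (hκ : 0 ≤ κ)
    (hX : 2 ≤ X) : |amplitudeDeriv a κ X| ≤ 12 * √X := by
  have hS := sinh_half_log_pos (by linarith : 1 < X)
  have hC := cosh_half_log_le_sqrt (by linarith : 1 ≤ X)
  set S := Real.sinh (Real.log X / 2)
  set C := Real.cosh (Real.log X / 2)
  set e := Real.exp (-(κ * S))
  have he₀ : 0 < e := Real.exp_pos _
  have he₁ : e ≤ 1 := Real.exp_le_one_iff.2 (by nlinarith)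
  have hw₀ : 0 ≤ κ * S * e := by positivity
  have hw₁ : κ * S * e ≤ 1 :=
    (Real.mul_exp_neg_le_exp_neg_one _).trans (Real.exp_le_one_iff.2 (by norm_num))
  have hq : a / S ^ 2 ≤ 8 := by
    rw [div_eq_mul_inv]
    nlinarith [inv_sinh_half_log_sq_le hX, inv_pos.2 (pow_pos hS 2)]
  have hq₀ : 0 ≤ a / S ^ 2 := by positivity
  have hosc : |(1 - a / S ^ 2) * e - (1 + a / S ^ 2) * (κ * S * e)| ≤ 18 := by
    rw [abs_le]; constructor <;> nlinarith
  have hamp : |(S + a / S) * e| ≤ 3 * √X := by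
    rw [abs_of_nonneg (by positivity)]
    nlinarith [sinh_half_log_add_div_le ha₀ ha₁ hX, hS.le, Real.sqrt_nonneg X]
  calc |amplitudeDeriv a κ X|
      ≤ |(S + a / S) * e| + C / 2 * |(1 - a / S ^ 2) * e - (1 + a / S ^ 2) * (κ * S * e)| := by
        rw [← abs_of_pos (by positivity : 0 < C / 2), ← abs_mul]
        exact abs_add_le _ _
    _ ≤ 3 * √X + √X / 2 * 18 := by gcongr
    _ = 12 * √X := by ring

theorem norm_integral_amplitude_mul_phaseDeriv_le {a κ A : ℝ} (ha₀ : 0 ≤ a) (ha₁ : a ≤ 1)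
    (hκ : 0 ≤ κ) (hA : 2 ≤ A) (μ : ℝ) :
    ‖∫ X in A..2 * A, (amplitude a κ X : ℂ) * phaseDeriv μ X‖ ≤ 48 * A * √A := by
  have h2X : ∀ X ∈ Icc A (2 * A), 2 ≤ X := fun X hX => hA.trans hX.1
  have hIoi : Icc A (2 * A) ⊆ Ioi 1 := fun X hX => mem_Ioi.2 (by linarith [h2X X hX])
  have hsqrt : ∀ X ∈ Icc A (2 * A), √X ≤ 2 * √A := fun X hX =>
    Real.sqrt_le_iff.2 ⟨by positivity, by nlinarith [Real.sq_sqrt (by linarith : 0 ≤ A), hX.2]⟩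
  have hAA : A ≤ 2 * A := by linarith
  calc _ ≤ 2 * (12 * A * √A) + 24 * √A * (2 * A - A) :=
        norm_integral_mul_deriv_le hAA
          (fun X hX => (hasDerivAt_amplitude a κ (hIoi hX)).ofReal_comp)
          (fun X hX => hasDerivAt_phase μ (zero_lt_one.trans (hIoi hX)).ne')
          ((continuous_ofReal.comp_continuousOn
            ((continuousOn_amplitudeDeriv a κ).mono hIoi)).intervalIntegrable_of_Icc hAA)
          (((continuousOn_phaseDeriv μ).mono
            (hIoi.trans (Ioi_subset_Ioi zero_le_one))).intervalIntegrable_of_Icc hAA)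
          (fun X hX => by
            rw [norm_real, Real.norm_eq_abs]
            calc _ ≤ 3 * X * √X := abs_amplitude_le ha₀ ha₁ hκ (h2X X hX)
              _ ≤ 3 * (2 * A) * (2 * √A) := by gcongr; exacts [hX.2, hsqrt X hX]
              _ = 12 * A * √A := by ring)
          (fun X hX => by
            rw [norm_real, Real.norm_eq_abs]
            calc _ ≤ 12 * √X := abs_amplitudeDeriv_le ha₀ ha₁ hκ (h2X X hX)
              _ ≤ 12 * (2 * √A) := by gcongr; exact hsqrt X hX
              _ = 24 * √A := by ring)
          (fun X _ => (norm_phase μ X).le)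
    _ = 48 * A * √A := by ring

theorem amplitude_mul_phaseDeriv (a κ μ : ℝ) {X : ℝ} (hX : 1 < X) :
    (amplitude a κ X : ℂ) * phaseDeriv μ X =
      I * μ / 2 * (((Real.sinh (Real.log X / 2) ^ 2 + a) *
        Real.exp (-(κ * Real.sinh (Real.log X / 2))) : ℝ) : ℂ) * phase μ X := by
  have hX0 : (X : ℂ) ≠ 0 := by norm_cast; positivity
  have hS : ((Real.sinh (Real.log X / 2) : ℝ) : ℂ) ≠ 0 := by
    exact_mod_cast (sinh_half_log_pos hX).ne'
  simp only [amplitude, phaseDeriv]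
  set S := Real.sinh (Real.log X / 2)
  push_cast
  field_simp

theorem phi_mul_conj_phi (T : ℝ) {X : ℝ} (hX : 1 < X) (z w : ℝ)
    (hμ : (z - w) * Real.cos (1 / (2 * T)) ≠ 0) :
    (-(Complex.sinh ((Real.log X + Complex.I/T)/2))/(Real.pi : ℂ)) * (z : ℂ) *
        Complex.exp (Complex.I * (z : ℂ) * Complex.cosh ((Real.log X + Complex.I/T)/2)) *
      starRingEnd ℂ ((-(Complex.sinh ((Real.log X + Complex.I/T)/2))/(Real.pi : ℂ)) * (w : ℂ) *
        Complex.exp (Complex.I * (w : ℂ) * Complex.cosh ((Real.log X + Complex.I/T)/2))) =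
      2 * z * w / (I * ((z - w) * Real.cos (1 / (2 * T)) : ℝ) * (Real.pi : ℂ) ^ 2) *
        ((amplitude (Real.sin (1 / (2 * T)) ^ 2) ((z + w) * Real.sin (1 / (2 * T))) X : ℂ) *
          phaseDeriv ((z - w) * Real.cos (1 / (2 * T))) X) := by
  have hβ : ((Real.log X : ℂ) + I / T) / 2 =
      ((Real.log X / 2 : ℝ) : ℂ) + ((1 / (2 * T) : ℝ) : ℂ) * I := by
    push_cast; ring
  rw [hβ, amplitude_mul_phaseDeriv _ _ _ hX]
  calc _ = 1 / (Real.pi : ℂ) ^ 2 * (sinh ((Real.log X / 2 : ℝ) + ((1 / (2 * T) : ℝ) : ℂ) * I) * z *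
        exp (I * z * cosh ((Real.log X / 2 : ℝ) + ((1 / (2 * T) : ℝ) : ℂ) * I)) *
      starRingEnd ℂ (sinh ((Real.log X / 2 : ℝ) + ((1 / (2 * T) : ℝ) : ℂ) * I) * w *
        exp (I * w * cosh ((Real.log X / 2 : ℝ) + ((1 / (2 * T) : ℝ) : ℂ) * I)))) := by
        simp only [map_mul, map_div₀, map_neg, conj_ofReal]
        ring
    _ = _ := by
        rw [sinh_mul_exp_mul_conj, phase]
        have hπ : (Real.pi : ℂ) ≠ 0 := ofReal_ne_zero.2 Real.pi_ne_zero
        have hμ' : (((z - w) * Real.cos (1 / (2 * T)) : ℝ) : ℂ) ≠ 0 := ofReal_ne_zero.2 hμ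
        field_simp
        push_cast
        ring

end PhiCorrelation

open PhiCorrelation

theorem stmt_7 :
    ∃ C > 0, ∀ A T : ℝ, 2 < A → 2 < T →
      ∀ phi : ℝ → ℝ → ℂ,
      (∀ X z, phi X z =
        (-(Complex.sinh ((Real.log X + Complex.I/T)/2))/(Real.pi : ℂ)) * (z : ℂ) *
          Complex.exp (Complex.I * (z : ℂ) * Complex.cosh ((Real.log X + Complex.I/T)/2))) →
      ∀ z₁ z₂ : ℝ, 0 < z₁ → 0 < z₂ → z₁ ≠ z₂ →
        ‖(1/(A:ℂ)) * ∫ X in A..(2*A), phi X z₁ * (starRingEnd ℂ) (phi X z₂)‖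
          ≤ C * z₁ * z₂ * Real.sqrt A / |z₁ - z₂| := by
  refine ⟨48, by norm_num, fun A T hA hT phi hphi z₁ z₂ hz₁ hz₂ hne => ?_⟩
  set t := 1 / (2 * T)
  have ht₀ : 0 < t := by positivity
  have ht₁ : t ≤ 1 := by rw [div_le_one (by linarith)]; linarith
  have hsin : 0 ≤ Real.sin t :=
    Real.sin_nonneg_of_nonneg_of_le_pi ht₀.le (by linarith [Real.pi_gt_three])
  set μ := (z₁ - z₂) * Real.cos t
  have hμ : |z₁ - z₂| ≤ 2 * |μ| := abs_le_two_mul_abs_mul_cos (abs_le.2 ⟨by linarith, ht₁⟩)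
  have hμ₀ : μ ≠ 0 := abs_pos.1 (by linarith [abs_pos.2 (sub_ne_zero.2 hne)])
  have hintegrand : ∫ X in A..(2*A), phi X z₁ * (starRingEnd ℂ) (phi X z₂) =
      2 * z₁ * z₂ / (I * μ * (Real.pi : ℂ) ^ 2) * ∫ X in A..(2*A),
        (amplitude (Real.sin t ^ 2) ((z₁ + z₂) * Real.sin t) X : ℂ) * phaseDeriv μ X := by
    rw [← intervalIntegral.integral_const_mul]
    refine intervalIntegral.integral_congr fun X hX => ?_
    rw [uIcc_of_le (by linarith)] at hX
    rw [hphi, hphi]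
    exact phi_mul_conj_phi T (by linarith [hX.1] : 1 < X) z₁ z₂ hμ₀
  rw [hintegrand, norm_mul, norm_mul, norm_div, norm_one, norm_real, Real.norm_eq_abs,
    abs_of_pos (by linarith : 0 < A)]
  calc 1 / A * (‖_‖ * ‖_‖) ≤ 1 / A * (z₁ * z₂ / |z₁ - z₂| * (48 * A * √A)) := by
        gcongr
        · exact norm_two_mul_mul_div_I_mul_pi_sq_le hz₁ hz₂ hne hμ
        · exact norm_integral_amplitude_mul_phaseDeriv_le (sq_nonneg _) (Real.sin_sq_le_one t)
            (mul_nonneg (by linarith) hsin) hA.le μ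
    _ = 48 * z₁ * z₂ * √A / |z₁ - z₂| := by field_simp
end

section
/- Suppose (t_j) is a sequence of positive reals with unit-interval counting bound #{U ≤ t_j ≤ U+1} ≤ C₀ U for U > 1, and at most C₀ terms with t_j ≤ 2. Let 0 < δ < 1/4. Then the double sum ∑_{t_j ≤ δ^{-1}} (1/t_j) ∑_{t_ℓ > t_j + 1} 1/(t_ℓ (t_ℓ − t_j)²) ≤ C / δ, for a constant C depending only on C₀. -/
open Finset in
private lemma sumsq_le_two (K : Finset ℕ) : ∑ k ∈ K, (1:ℝ)/(k:ℝ)^2 ≤ 2 := by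
  have hs : Summable (fun n : ℕ => (1:ℝ)/(n:ℝ)^2) := hasSum_zeta_two.summable
  have h1 : ∑ k ∈ K, (1:ℝ)/(k:ℝ)^2 ≤ ∑' n : ℕ, (1:ℝ)/(n:ℝ)^2 :=
    Summable.sum_le_tsum K (fun i _ => by positivity) hs
  have h2 : (∑' n : ℕ, (1:ℝ)/(n:ℝ)^2) = Real.pi^2/6 := hasSum_zeta_two.tsum_eq
  have h3 : Real.pi < 3.15 := Real.pi_lt_d2
  nlinarith [Real.pi_pos]

theorem stmt_13 (t : ℕ → ℝ) (hpos : ∀ j, 0 < t j) (C₀ : ℝ) (hC₀ : 0 < C₀)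
    (hcount : ∀ U : ℝ, 1 < U → {j : ℕ | t j ∈ Set.Icc U (U+1)}.Finite ∧
      (Nat.card {j : ℕ | t j ∈ Set.Icc U (U+1)} : ℝ) ≤ C₀ * U)
    (hsmallfin : {j : ℕ | t j ≤ 2}.Finite)
    (hsmall : (Nat.card {j : ℕ | t j ≤ 2} : ℝ) ≤ C₀) :
    ∃ C > 0, ∀ δ : ℝ, 0 < δ → δ < 1/4 →
      (∑' j : ℕ, if t j ≤ δ⁻¹ then
          (1/(t j)) * ∑' l : ℕ, (if t j + 1 < t l then 1/(t l * (t l - t j)^2) else 0)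
        else 0)
        ≤ C / δ := by
  classical
  -- Finset counting consequence of hcount
  have hcnt : ∀ (s : Finset ℕ) (U : ℝ), 1 < U →
      ((s.filter (fun l => t l ∈ Set.Icc U (U+1))).card : ℝ) ≤ C₀ * U := by
    intro s U hU
    obtain ⟨hfin, hle⟩ := hcount U hU
    have hsub : ((s.filter (fun l => t l ∈ Set.Icc U (U+1))) : Set ℕ)
        ⊆ {j : ℕ | t j ∈ Set.Icc U (U+1)} := by
      intro x hx
      simp only [Finset.coe_filter, Set.mem_setOf_eq] at hx ⊢
      exact hx.2
    have h1 : (s.filter (fun l => t l ∈ Set.Icc U (U+1))).card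
        ≤ Nat.card {j : ℕ | t j ∈ Set.Icc U (U+1)} := by
      rw [Nat.card_coe_set_eq, ← Set.ncard_coe_finset]
      exact Set.ncard_le_ncard hsub hfin
    calc ((s.filter (fun l => t l ∈ Set.Icc U (U+1))).card : ℝ)
        ≤ (Nat.card {j : ℕ | t j ∈ Set.Icc U (U+1)} : ℝ) := by exact_mod_cast h1
      _ ≤ C₀ * U := hle
  -- inner sum bound
  set B : ℝ := 2 * C₀ with hB
  have hBpos : 0 < B := by positivity
  have hinner : ∀ a : ℝ, 0 < a →
      (∑' l : ℕ, (if a + 1 < t l then 1/(t l * (t l - a)^2) else 0)) ≤ B := by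
    intro a ha
    refine tsum_le_of_sum_le' hBpos.le ?_
    intro s
    rw [← Finset.sum_filter]
    set s' := s.filter (fun l => a + 1 < t l) with hs'
    set κ : ℕ → ℕ := fun l => ⌊t l - a⌋₊ with hκ
    rw [← Finset.sum_fiberwise_of_maps_to
      (t := s'.image κ) (fun l hl => Finset.mem_image_of_mem κ hl)
      (fun l => 1/(t l * (t l - a)^2))]
    have key : ∀ k ∈ s'.image κ,
        (∑ l ∈ s'.filter (fun l => κ l = k), 1/(t l * (t l - a)^2))
          ≤ C₀ * (1/(k:ℝ)^2) := by
      intro k hk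
      obtain ⟨l₀, hl₀s, hl₀⟩ := Finset.mem_image.1 hk
      have hl₀' : a + 1 < t l₀ := (Finset.mem_filter.1 hl₀s).2
      have hk1 : 1 ≤ k := by
        rw [← hl₀]
        exact Nat.le_floor (by push_cast; linarith)
      have hk1' : (1:ℝ) ≤ (k:ℝ) := by exact_mod_cast hk1
      have hak : (1:ℝ) < a + k := by linarith
      have hakpos : (0:ℝ) < a + k := by linarith
      -- each element of the fiber lies in Icc (a+k) (a+k+1)
      have hmem : ∀ l ∈ s'.filter (fun l => κ l = k),
          t l ∈ Set.Icc (a + k) (a + k + 1) := by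
        intro l hl
        obtain ⟨hls', hlk⟩ := Finset.mem_filter.1 hl
        have h1 : a + 1 < t l := (Finset.mem_filter.1 hls').2
        have hnn : (0:ℝ) ≤ t l - a := by linarith
        have hfl : (k:ℝ) ≤ t l - a := by rw [← hlk]; exact Nat.floor_le hnn
        have hfu : t l - a < (k:ℝ) + 1 := by rw [← hlk]; exact Nat.lt_floor_add_one _
        constructor <;> [linarith; linarith]
      -- termwise bound
      have hterm : ∀ l ∈ s'.filter (fun l => κ l = k),
          1/(t l * (t l - a)^2) ≤ 1/((a+k) * (k:ℝ)^2) := by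
        intro l hl
        obtain ⟨htl1, _⟩ := hmem l hl
        obtain ⟨hls', hlk⟩ := Finset.mem_filter.1 hl
        have hnn : (0:ℝ) ≤ t l - a := by
          have h1 : a + 1 < t l := (Finset.mem_filter.1 hls').2; linarith
        have hfl : (k:ℝ) ≤ t l - a := by rw [← hlk]; exact Nat.floor_le hnn
        have h2 : (a+k) * (k:ℝ)^2 ≤ t l * (t l - a)^2 := by
          have hsq : (k:ℝ)^2 ≤ (t l - a)^2 := by nlinarith
          have : (0:ℝ) < (k:ℝ)^2 := by positivity
          nlinarith
        exact one_div_le_one_div_of_le (by positivity) h2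
      have hcard : ((s'.filter (fun l => κ l = k)).card : ℝ) ≤ C₀ * (a + k) := by
        have hsub : s'.filter (fun l => κ l = k)
            ⊆ s.filter (fun l => t l ∈ Set.Icc (a+(k:ℝ)) (a+(k:ℝ)+1)) := by
          intro l hl
          refine Finset.mem_filter.2 ⟨?_, hmem l hl⟩
          exact Finset.mem_of_mem_filter l (Finset.mem_of_mem_filter l hl)
        calc ((s'.filter (fun l => κ l = k)).card : ℝ)
            ≤ ((s.filter (fun l => t l ∈ Set.Icc (a+(k:ℝ)) (a+(k:ℝ)+1))).card : ℝ) := by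
              exact_mod_cast Finset.card_le_card hsub
          _ ≤ C₀ * (a + k) := hcnt s (a+(k:ℝ)) hak
      calc (∑ l ∈ s'.filter (fun l => κ l = k), 1/(t l * (t l - a)^2))
          ≤ ((s'.filter (fun l => κ l = k)).card : ℝ) * (1/((a+k) * (k:ℝ)^2)) := by
            simpa using Finset.sum_le_card_nsmul _ _ _ hterm
        _ ≤ (C₀ * (a + k)) * (1/((a+k) * (k:ℝ)^2)) := by
            apply mul_le_mul_of_nonneg_right hcard (by positivity)
        _ = C₀ * (1/(k:ℝ)^2) := by
            field_simp
      
    calc (∑ k ∈ s'.image κ, ∑ l ∈ s'.filter (fun l => κ l = k), 1/(t l * (t l - a)^2))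
        ≤ ∑ k ∈ s'.image κ, C₀ * (1/(k:ℝ)^2) := Finset.sum_le_sum key
      _ = C₀ * ∑ k ∈ s'.image κ, (1:ℝ)/(k:ℝ)^2 := by rw [Finset.mul_sum]
      _ ≤ C₀ * 2 := by
          apply mul_le_mul_of_nonneg_left (sumsq_le_two _) hC₀.le
      _ = B := by rw [hB]; ring
  -- inner tsum nonneg
  have hinn0 : ∀ a : ℝ,
      0 ≤ (∑' l : ℕ, (if a + 1 < t l then 1/(t l * (t l - a)^2) else 0)) := by
    intro a
    apply tsum_nonneg
    intro l
    split
    · have := hpos l; positivity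
    · exact le_refl 0
  -- the constant
  set S₀ : ℝ := ∑ j ∈ hsmallfin.toFinset, (1/(t j)) * B with hS₀
  have hS₀0 : 0 ≤ S₀ := by
    apply Finset.sum_nonneg
    intro j _
    have := hpos j
    positivity
  refine ⟨S₀ + 2*C₀^2 + 1, by positivity, ?_⟩
  intro δ hδ hδ4
  have hδinv : (4:ℝ) < δ⁻¹ := by
    rw [lt_inv_comm₀ (by norm_num) hδ]
    · linarith
  set F : ℕ → ℝ := fun j => if t j ≤ δ⁻¹ then
      (1/(t j)) * ∑' l : ℕ, (if t j + 1 < t l then 1/(t l * (t l - t j)^2) else 0)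
    else 0 with hF
  have hF0 : ∀ j, 0 ≤ F j := by
    intro j
    simp only [hF]
    split
    · have := hpos j; have := hinn0 (t j); positivity
    · exact le_refl 0
  have hFle : ∀ j, F j ≤ (1/(t j)) * B := by
    intro j
    have h1 : 0 ≤ 1/(t j) := by have := hpos j; positivity
    simp only [hF]
    split
    · exact mul_le_mul_of_nonneg_left (hinner (t j) (hpos j)) h1
    · positivity
  have hRHS0 : (0:ℝ) ≤ (S₀ + 2*C₀^2 + 1) / δ := by positivity
  refine tsum_le_of_sum_le' hRHS0 ?_
  intro s
  rw [← Finset.sum_filter_add_sum_filter_not s (fun j => t j ≤ 2) F]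
  -- small part
  have hsmallpart : ∑ j ∈ s.filter (fun j => t j ≤ 2), F j ≤ S₀ := by
    have hsub : s.filter (fun j => t j ≤ 2) ⊆ hsmallfin.toFinset := by
      intro j hj
      simp only [Set.Finite.mem_toFinset, Set.mem_setOf_eq]
      exact (Finset.mem_filter.1 hj).2
    calc ∑ j ∈ s.filter (fun j => t j ≤ 2), F j
        ≤ ∑ j ∈ s.filter (fun j => t j ≤ 2), (1/(t j)) * B :=
          Finset.sum_le_sum (fun j _ => hFle j)
      _ ≤ S₀ := by
          apply Finset.sum_le_sum_of_subset_of_nonneg hsub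
          intro j _ _
          have := hpos j
          positivity
  -- large part
  have hlargepart : ∑ j ∈ s.filter (fun j => ¬ t j ≤ 2), F j ≤ 2*C₀^2 * δ⁻¹ := by
    rw [← Finset.sum_filter_of_ne (p := fun j => t j ≤ δ⁻¹)
      (by intro x hx hne; by_contra h; simp only [hF, if_neg h] at hne; exact hne rfl)]
    set s₂ := (s.filter (fun j => ¬ t j ≤ 2)).filter (fun j => t j ≤ δ⁻¹) with hs₂
    have hs₂mem : ∀ j ∈ s₂, 2 < t j ∧ t j ≤ δ⁻¹ := by
      intro j hj
      obtain ⟨hj1, hj2⟩ := Finset.mem_filter.1 hj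
      exact ⟨not_le.1 (Finset.mem_filter.1 hj1).2, hj2⟩
    set κ : ℕ → ℕ := fun j => ⌊t j⌋₊ with hκ
    rw [← Finset.sum_fiberwise_of_maps_to (t := s₂.image κ)
      (fun j hj => Finset.mem_image_of_mem κ hj) F]
    have key : ∀ k ∈ s₂.image κ,
        (∑ j ∈ s₂.filter (fun j => κ j = k), F j) ≤ 2*C₀^2 := by
      intro k hk
      obtain ⟨j₀, hj₀s, hj₀⟩ := Finset.mem_image.1 hk
      have h2tj : 2 < t j₀ := (hs₂mem j₀ hj₀s).1
      have hk2 : 2 ≤ k := by rw [← hj₀]; exact Nat.le_floor (by push_cast; linarith)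
      have hk2' : (2:ℝ) ≤ (k:ℝ) := by exact_mod_cast hk2
      have hmem : ∀ j ∈ s₂.filter (fun j => κ j = k),
          t j ∈ Set.Icc (k:ℝ) ((k:ℝ)+1) := by
        intro j hj
        obtain ⟨hjs₂, hjk⟩ := Finset.mem_filter.1 hj
        have hnn : (0:ℝ) ≤ t j := (hpos j).le
        have hfl : (k:ℝ) ≤ t j := by rw [← hjk]; exact Nat.floor_le hnn
        have hfu : t j < (k:ℝ) + 1 := by rw [← hjk]; exact Nat.lt_floor_add_one _
        exact ⟨hfl, hfu.le⟩
      have hterm : ∀ j ∈ s₂.filter (fun j => κ j = k), F j ≤ (1/(k:ℝ)) * B := by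
        intro j hj
        obtain ⟨hfl, _⟩ := hmem j hj
        calc F j ≤ (1/(t j)) * B := hFle j
          _ ≤ (1/(k:ℝ)) * B := by
              apply mul_le_mul_of_nonneg_right _ hBpos.le
              exact one_div_le_one_div_of_le (by linarith) hfl
      have hcard : ((s₂.filter (fun j => κ j = k)).card : ℝ) ≤ C₀ * k := by
        have hsub : s₂.filter (fun j => κ j = k)
            ⊆ s.filter (fun j => t j ∈ Set.Icc (k:ℝ) ((k:ℝ)+1)) := by
          intro j hj
          refine Finset.mem_filter.2 ⟨?_, hmem j hj⟩
          have := Finset.mem_of_mem_filter j (Finset.mem_of_mem_filter j hj)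
          exact Finset.mem_of_mem_filter j this
        calc ((s₂.filter (fun j => κ j = k)).card : ℝ)
            ≤ ((s.filter (fun j => t j ∈ Set.Icc (k:ℝ) ((k:ℝ)+1))).card : ℝ) := by
              exact_mod_cast Finset.card_le_card hsub
          _ ≤ C₀ * k := hcnt s (k:ℝ) (by linarith)
      calc (∑ j ∈ s₂.filter (fun j => κ j = k), F j)
          ≤ ((s₂.filter (fun j => κ j = k)).card : ℝ) * ((1/(k:ℝ)) * B) := by
            simpa using Finset.sum_le_card_nsmul _ _ _ hterm
        _ ≤ (C₀ * k) * ((1/(k:ℝ)) * B) := by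
            apply mul_le_mul_of_nonneg_right hcard (by positivity)
        _ = 2*C₀^2 := by
            rw [hB]
            have : (k:ℝ) ≠ 0 := by positivity
            field_simp
    have himg : s₂.image κ ⊆ Finset.Icc 2 ⌊δ⁻¹⌋₊ := by
      intro k hk
      obtain ⟨j₀, hj₀s, hj₀⟩ := Finset.mem_image.1 hk
      obtain ⟨h1, h2⟩ := hs₂mem j₀ hj₀s
      rw [Finset.mem_Icc, ← hj₀]
      constructor
      · exact Nat.le_floor (by push_cast; linarith)
      · exact Nat.floor_le_floor h2
    have hcardimg : ((s₂.image κ).card : ℝ) ≤ δ⁻¹ := by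
      calc ((s₂.image κ).card : ℝ) ≤ ((Finset.Icc 2 ⌊δ⁻¹⌋₊).card : ℝ) := by
            exact_mod_cast Finset.card_le_card himg
        _ = ((⌊δ⁻¹⌋₊ + 1 - 2 : ℕ) : ℝ) := by rw [Nat.card_Icc]
        _ ≤ (⌊δ⁻¹⌋₊ : ℝ) := by
            have h4 : ⌊δ⁻¹⌋₊ + 1 - 2 ≤ ⌊δ⁻¹⌋₊ := by omega
            exact_mod_cast h4
        _ ≤ δ⁻¹ := Nat.floor_le (by positivity)
    calc (∑ k ∈ s₂.image κ, ∑ j ∈ s₂.filter (fun j => κ j = k), F j)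
        ≤ ∑ k ∈ s₂.image κ, 2*C₀^2 := Finset.sum_le_sum key
      _ = ((s₂.image κ).card : ℝ) * (2*C₀^2) := by
          rw [Finset.sum_const, nsmul_eq_mul]
      _ ≤ δ⁻¹ * (2*C₀^2) := by
          apply mul_le_mul_of_nonneg_right hcardimg (by positivity)
      _ = 2*C₀^2 * δ⁻¹ := by ring
  have hfin : S₀ + 2*C₀^2 * δ⁻¹ ≤ (S₀ + 2*C₀^2 + 1) / δ := by
    rw [div_eq_mul_inv]
    have h1 : (1:ℝ) ≤ δ⁻¹ := by linarith
    nlinarith [sq_nonneg C₀]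
  linarith [hsmallpart, hlargepart]
end

section
/- Suppose (t_j) is a sequence of positive reals with #{U ≤ t_j ≤ U+1} ≤ C₀ U for U > 1 and at most C₀ terms with t_j ≤ 2. Let 0 < δ < 1/4. Then the near-diagonal double sum ∑_{t_j ≤ δ^{-1}} (1/t_j) ∑_{t_j ≤ t_ℓ ≤ t_j + 1} (1/t_ℓ) + δ^{-2} ∑_{t_j > δ^{-1}} (1/t_j²) ∑_{t_j ≤ t_ℓ ≤ t_j+1} (1/t_ℓ²) ≤ C/δ for a constant C depending only on C₀. -/
lemma aux_sumsq (N M : ℕ) (hN : 2 ≤ N) :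
    ∑ k ∈ Finset.Icc N M, (1:ℝ)/(k:ℝ)^2 ≤ 1/((N:ℝ)-1) := by
  have hN2 : (2:ℝ) ≤ (N:ℝ) := by exact_mod_cast hN
  rcases lt_or_ge M N with h | h
  · rw [Finset.Icc_eq_empty (by omega)]
    simp only [Finset.sum_empty]
    have : (0:ℝ) < (N:ℝ) - 1 := by linarith
    positivity
  · have key : ∀ m : ℕ, N ≤ m → ∑ k ∈ Finset.Icc N m, (1:ℝ)/(k:ℝ)^2 ≤ 1/((N:ℝ)-1) - 1/(m:ℝ) := by
      intro m hm
      induction m, hm using Nat.le_induction with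
      | base =>
        rw [Finset.Icc_self, Finset.sum_singleton]
        rw [div_sub_div _ _ (by linarith) (by linarith)]
        rw [div_le_div_iff₀ (by positivity) (by nlinarith)]
        nlinarith
      | succ n hn ih =>
        rw [Finset.sum_Icc_succ_top (by omega)]
        have hnR : (2:ℝ) ≤ (n:ℝ) := by
          have h1 : (N:ℝ) ≤ (n:ℝ) := by exact_mod_cast hn
          linarith
        have hstep : (1:ℝ)/((n:ℝ)+1)^2 ≤ 1/(n:ℝ) - 1/((n:ℝ)+1) := by
          rw [div_sub_div _ _ (by linarith) (by linarith)]
          rw [div_le_div_iff₀ (by positivity) (by positivity)]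
          nlinarith
        push_cast
        linarith
    have hk := key M h
    have hMpos : (0:ℝ) < (M:ℝ) := by
      have : 0 < M := by omega
      exact_mod_cast this
    have h2 : (0:ℝ) < 1/(M:ℝ) := by positivity
    linarith

theorem stmt_14 (t : ℕ → ℝ) (hpos : ∀ j, 0 < t j) (C₀ : ℝ) (hC₀ : 0 < C₀)
    (hcount : ∀ U : ℝ, 1 < U → {j : ℕ | t j ∈ Set.Icc U (U+1)}.Finite ∧
      (Nat.card {j : ℕ | t j ∈ Set.Icc U (U+1)} : ℝ) ≤ C₀ * U)
    (hsmallfin : {j : ℕ | t j ≤ 2}.Finite)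
    (hsmall : (Nat.card {j : ℕ | t j ≤ 2} : ℝ) ≤ C₀) :
    ∃ C > 0, ∀ δ : ℝ, 0 < δ → δ < 1/4 →
      (∑' j : ℕ, if t j ≤ δ⁻¹ then
          (1/(t j)) * ∑' l : ℕ, (if t j ≤ t l ∧ t l ≤ t j + 1 then 1/(t l) else 0)
        else 0)
      + δ⁻¹^2 * (∑' j : ℕ, if δ⁻¹ < t j then
          (1/(t j)^2) * ∑' l : ℕ, (if t j ≤ t l ∧ t l ≤ t j + 1 then 1/(t l)^2 else 0)
        else 0)
        ≤ C / δ := by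
  classical
  set F := hsmallfin.toFinset with hF
  set M0 : ℝ := ∑ j ∈ F, C₀ / (t j)^2 with hM0def
  have hM0 : 0 ≤ M0 := Finset.sum_nonneg fun j _ => by positivity
  -- finiteness of inner sets
  have hSfin : ∀ j : ℕ, {l : ℕ | t j ≤ t l ∧ t l ≤ t j + 1}.Finite := by
    intro j
    rcases le_or_gt (t j) 1 with h | h
    · exact hsmallfin.subset fun l hl => by
        simp only [Set.mem_setOf_eq] at *; linarith [hl.2]
    · exact ((hcount (t j) h).1).subset fun l hl => by
        simp only [Set.mem_setOf_eq, Set.mem_Icc] at *; exact hl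
  -- card bound for inner sets
  have hcardS : ∀ j : ℕ, (Nat.card {l : ℕ | t j ≤ t l ∧ t l ≤ t j + 1} : ℝ)
      ≤ C₀ * max (t j) 1 := by
    intro j
    rcases le_or_gt (t j) 1 with h | h
    · have hsub : {l : ℕ | t j ≤ t l ∧ t l ≤ t j + 1} ⊆ {j : ℕ | t j ≤ 2} := by
        intro l hl; simp only [Set.mem_setOf_eq] at *; linarith [hl.2]
      have h1 : Nat.card {l : ℕ | t j ≤ t l ∧ t l ≤ t j + 1}
          ≤ Nat.card {j : ℕ | t j ≤ 2} := by
        rw [Nat.card_coe_set_eq, Nat.card_coe_set_eq]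
        exact Set.ncard_le_ncard hsub hsmallfin
      have h2 : (Nat.card {l : ℕ | t j ≤ t l ∧ t l ≤ t j + 1} : ℝ) ≤ C₀ :=
        le_trans (by exact_mod_cast h1) hsmall
      calc (Nat.card {l : ℕ | t j ≤ t l ∧ t l ≤ t j + 1} : ℝ) ≤ C₀ := h2
        _ = C₀ * 1 := by ring
        _ ≤ C₀ * max (t j) 1 := by
            exact mul_le_mul_of_nonneg_left (le_max_right _ _) hC₀.le
    · have heq : {l : ℕ | t j ≤ t l ∧ t l ≤ t j + 1}
          = {l : ℕ | t l ∈ Set.Icc (t j) (t j + 1)} := by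
        ext l; simp [Set.mem_Icc]
      rw [heq]
      calc (Nat.card {l : ℕ | t l ∈ Set.Icc (t j) (t j + 1)} : ℝ)
          ≤ C₀ * t j := (hcount (t j) h).2
        _ ≤ C₀ * max (t j) 1 := by
            exact mul_le_mul_of_nonneg_left (le_max_left _ _) hC₀.le
  -- inner sum bounds
  have hinner1 : ∀ j : ℕ, (∑' l : ℕ, (if t j ≤ t l ∧ t l ≤ t j + 1 then 1/(t l) else 0))
      ≤ (Nat.card {l : ℕ | t j ≤ t l ∧ t l ≤ t j + 1} : ℝ) * (1 / t j) := by
    intro j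
    have htj := hpos j
    apply tsum_le_of_sum_le' (mul_nonneg (Nat.cast_nonneg _) (by positivity))
    intro s
    rw [← Finset.sum_filter]
    calc ∑ l ∈ s.filter (fun l => t j ≤ t l ∧ t l ≤ t j + 1), 1/(t l)
        ≤ (s.filter (fun l => t j ≤ t l ∧ t l ≤ t j + 1)).card • (1/t j) := by
          apply Finset.sum_le_card_nsmul
          intro l hl
          simp only [Finset.mem_filter] at hl
          exact one_div_le_one_div_of_le (hpos j) hl.2.1
      _ = ((s.filter (fun l => t j ≤ t l ∧ t l ≤ t j + 1)).card : ℝ) * (1/t j) := by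
          rw [nsmul_eq_mul]
      _ ≤ (Nat.card {l : ℕ | t j ≤ t l ∧ t l ≤ t j + 1} : ℝ) * (1/t j) := by
          apply mul_le_mul_of_nonneg_right _ (by positivity)
          rw [Nat.card_coe_set_eq, Set.ncard_eq_toFinset_card _ (hSfin j)]
          have hsub : s.filter (fun l => t j ≤ t l ∧ t l ≤ t j + 1) ⊆ (hSfin j).toFinset := by
            intro l hl
            simp only [Finset.mem_filter] at hl
            rw [Set.Finite.mem_toFinset]
            exact hl.2
          exact_mod_cast Finset.card_le_card hsub
  have hinner2 : ∀ j : ℕ, (∑' l : ℕ, (if t j ≤ t l ∧ t l ≤ t j + 1 then 1/(t l)^2 else 0))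
      ≤ (Nat.card {l : ℕ | t j ≤ t l ∧ t l ≤ t j + 1} : ℝ) * (1 / (t j)^2) := by
    intro j
    have htj := hpos j
    apply tsum_le_of_sum_le' (mul_nonneg (Nat.cast_nonneg _) (by positivity))
    intro s
    rw [← Finset.sum_filter]
    calc ∑ l ∈ s.filter (fun l => t j ≤ t l ∧ t l ≤ t j + 1), 1/(t l)^2
        ≤ (s.filter (fun l => t j ≤ t l ∧ t l ≤ t j + 1)).card • (1/(t j)^2) := by
          apply Finset.sum_le_card_nsmul
          intro l hl
          simp only [Finset.mem_filter] at hl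
          apply one_div_le_one_div_of_le (pow_pos htj 2)
          exact pow_le_pow_left₀ (hpos j).le hl.2.1 2
      _ = ((s.filter (fun l => t j ≤ t l ∧ t l ≤ t j + 1)).card : ℝ) * (1/(t j)^2) := by
          rw [nsmul_eq_mul]
      _ ≤ (Nat.card {l : ℕ | t j ≤ t l ∧ t l ≤ t j + 1} : ℝ) * (1/(t j)^2) := by
          apply mul_le_mul_of_nonneg_right _ (by positivity)
          rw [Nat.card_coe_set_eq, Set.ncard_eq_toFinset_card _ (hSfin j)]
          have hsub : s.filter (fun l => t j ≤ t l ∧ t l ≤ t j + 1) ⊆ (hSfin j).toFinset := by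
            intro l hl
            simp only [Finset.mem_filter] at hl
            rw [Set.Finite.mem_toFinset]
            exact hl.2
          exact_mod_cast Finset.card_le_card hsub
  have hinnerpos1 : ∀ j : ℕ, 0 ≤ (∑' l : ℕ, (if t j ≤ t l ∧ t l ≤ t j + 1 then 1/(t l) else 0)) :=
    fun j => tsum_nonneg fun l => by
      split
      · exact one_div_nonneg.mpr (hpos l).le
      · exact le_refl 0
  have hinnerpos2 : ∀ j : ℕ, 0 ≤ (∑' l : ℕ, (if t j ≤ t l ∧ t l ≤ t j + 1 then 1/(t l)^2 else 0)) :=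
    fun j => tsum_nonneg fun l => by
      split
      · exact one_div_nonneg.mpr (by positivity)
      · exact le_refl 0
  -- a_j bounds
  have ha_small : ∀ j : ℕ, t j ≤ 1 →
      (1/(t j)) * (∑' l : ℕ, (if t j ≤ t l ∧ t l ≤ t j + 1 then 1/(t l) else 0)) ≤ C₀/(t j)^2 := by
    intro j hj
    have h1 := hinner1 j
    have h2 := hcardS j
    have hmax : max (t j) 1 = 1 := max_eq_right hj
    rw [hmax] at h2
    have htj := hpos j
    calc (1/(t j)) * (∑' l : ℕ, (if t j ≤ t l ∧ t l ≤ t j + 1 then 1/(t l) else 0))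
        ≤ (1/(t j)) * ((Nat.card {l : ℕ | t j ≤ t l ∧ t l ≤ t j + 1} : ℝ) * (1/t j)) := by
          exact mul_le_mul_of_nonneg_left h1 (one_div_nonneg.mpr htj.le)
      _ ≤ (1/(t j)) * ((C₀ * 1) * (1/t j)) := by
          apply mul_le_mul_of_nonneg_left _ (one_div_nonneg.mpr htj.le)
          exact mul_le_mul_of_nonneg_right h2 (one_div_nonneg.mpr htj.le)
      _ = C₀/(t j)^2 := by ring
  have ha_big : ∀ j : ℕ, 1 < t j →
      (1/(t j)) * (∑' l : ℕ, (if t j ≤ t l ∧ t l ≤ t j + 1 then 1/(t l) else 0))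
        ≤ C₀ * (1/(⌊t j⌋₊ : ℝ)) := by
    intro j hj
    have h1 := hinner1 j
    have h2 := hcardS j
    have hmax : max (t j) 1 = t j := max_eq_left hj.le
    rw [hmax] at h2
    have htj := hpos j
    have hfl : (1:ℝ) ≤ (⌊t j⌋₊ : ℝ) := by
      have : 1 ≤ ⌊t j⌋₊ := Nat.le_floor (by exact_mod_cast hj.le)
      exact_mod_cast this
    have hfl2 : (⌊t j⌋₊ : ℝ) ≤ t j := Nat.floor_le htj.le
    calc (1/(t j)) * (∑' l : ℕ, (if t j ≤ t l ∧ t l ≤ t j + 1 then 1/(t l) else 0))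
        ≤ (1/(t j)) * ((C₀ * t j) * (1/t j)) := by
          apply mul_le_mul_of_nonneg_left _ (one_div_nonneg.mpr htj.le)
          exact le_trans h1 (mul_le_mul_of_nonneg_right h2 (one_div_nonneg.mpr htj.le))
      _ = C₀ * (1/(t j)) := by
          have hne : t j ≠ 0 := ne_of_gt htj
          field_simp
      _ ≤ C₀ * (1/(⌊t j⌋₊ : ℝ)) := by
          apply mul_le_mul_of_nonneg_left _ hC₀.le
          exact one_div_le_one_div_of_le (by linarith) hfl2
  have hb_big : ∀ j : ℕ, 1 < t j →
      (1/(t j)^2) * (∑' l : ℕ, (if t j ≤ t l ∧ t l ≤ t j + 1 then 1/(t l)^2 else 0))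
        ≤ C₀ * (1/(⌊t j⌋₊ : ℝ)^3) := by
    intro j hj
    have h1 := hinner2 j
    have h2 := hcardS j
    have hmax : max (t j) 1 = t j := max_eq_left hj.le
    rw [hmax] at h2
    have htj := hpos j
    have hfl : (1:ℝ) ≤ (⌊t j⌋₊ : ℝ) := by
      have : 1 ≤ ⌊t j⌋₊ := Nat.le_floor (by exact_mod_cast hj.le)
      exact_mod_cast this
    have hfl2 : (⌊t j⌋₊ : ℝ) ≤ t j := Nat.floor_le htj.le
    calc (1/(t j)^2) * (∑' l : ℕ, (if t j ≤ t l ∧ t l ≤ t j + 1 then 1/(t l)^2 else 0))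
        ≤ (1/(t j)^2) * ((C₀ * t j) * (1/(t j)^2)) := by
          have h2pos : (0:ℝ) ≤ 1/(t j)^2 := one_div_nonneg.mpr (by positivity)
          apply mul_le_mul_of_nonneg_left _ h2pos
          exact le_trans h1 (mul_le_mul_of_nonneg_right h2 h2pos)
      _ = C₀ * (1/(t j)^3) := by
          have hne : t j ≠ 0 := ne_of_gt htj
          field_simp
      _ ≤ C₀ * (1/(⌊t j⌋₊ : ℝ)^3) := by
          apply mul_le_mul_of_nonneg_left _ hC₀.le
          apply one_div_le_one_div_of_le (by positivity)
          exact pow_le_pow_left₀ (by linarith) hfl2 3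
  -- fiber card bound
  have hfiber : ∀ (k : ℕ), 1 ≤ k → ∀ s : Finset ℕ,
      (∀ j ∈ s, (k:ℝ) ≤ t j ∧ t j ≤ (k:ℝ)+1) → (s.card : ℝ) ≤ C₀ * k := by
    intro k hk s hs
    rcases eq_or_lt_of_le hk with hk1 | hk2
    · -- k = 1
      have hsub : ↑s ⊆ {j : ℕ | t j ≤ 2} := by
        intro j hj
        have := hs j hj
        simp only [Set.mem_setOf_eq]
        rw [← hk1] at this
        push_cast at this
        linarith [this.2]
      have h1 : s.card ≤ Nat.card {j : ℕ | t j ≤ 2} := by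
        rw [Nat.card_coe_set_eq, Set.ncard_eq_toFinset_card _ hsmallfin]
        apply Finset.card_le_card
        intro j hj
        rw [Set.Finite.mem_toFinset]
        exact hsub hj
      calc (s.card : ℝ) ≤ C₀ := le_trans (by exact_mod_cast h1) hsmall
        _ = C₀ * 1 := by ring
        _ ≤ C₀ * k := by
            apply mul_le_mul_of_nonneg_left _ hC₀.le
            exact_mod_cast hk
    · -- k ≥ 2
      have hkR : (1:ℝ) < (k:ℝ) := by exact_mod_cast hk2
      obtain ⟨hfin, hcard⟩ := hcount (k:ℝ) hkR
      have h1 : s.card ≤ Nat.card {j : ℕ | t j ∈ Set.Icc (k:ℝ) ((k:ℝ)+1)} := by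
        rw [Nat.card_coe_set_eq, Set.ncard_eq_toFinset_card _ hfin]
        apply Finset.card_le_card
        intro j hj
        rw [Set.Finite.mem_toFinset]
        simp only [Set.mem_setOf_eq, Set.mem_Icc]
        exact hs j hj
      exact le_trans (by exact_mod_cast h1) hcard
  -- the constant
  have hC0sq : (0:ℝ) < C₀^2 := by positivity
  refine ⟨M0 + 3*C₀^2, by nlinarith, ?_⟩
  intro δ hδ hδ4
  have hδne : δ ≠ 0 := ne_of_gt hδ
  have hδi0 : (0:ℝ) < δ⁻¹ := by positivity
  have hδi4 : (4:ℝ) < δ⁻¹ := by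
    rw [← one_div]
    rw [lt_div_iff₀ hδ]
    linarith
  set N := ⌊δ⁻¹⌋₊ with hNdef
  have hN4 : 4 ≤ N := Nat.le_floor (by push_cast; linarith)
  have hNle : (N:ℝ) ≤ δ⁻¹ := Nat.floor_le hδi0.le
  have hNlt : δ⁻¹ < (N:ℝ) + 1 := Nat.lt_floor_add_one δ⁻¹
  have hNR : (4:ℝ) ≤ (N:ℝ) := by exact_mod_cast hN4
  -- first sum
  have hT1 : (∑' j : ℕ, if t j ≤ δ⁻¹ then
      (1/(t j)) * ∑' l : ℕ, (if t j ≤ t l ∧ t l ≤ t j + 1 then 1/(t l) else 0)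
      else 0) ≤ M0 + C₀^2 * δ⁻¹ := by
    apply tsum_le_of_sum_le' (by nlinarith)
    intro s
    rw [← Finset.sum_filter]
    set s1 := s.filter (fun j => t j ≤ δ⁻¹) with hs1
    rw [← Finset.sum_filter_add_sum_filter_not s1 (fun j => t j ≤ 1)]
    have hpart1 : ∑ j ∈ s1.filter (fun j => t j ≤ 1),
        (1/(t j)) * (∑' l : ℕ, (if t j ≤ t l ∧ t l ≤ t j + 1 then 1/(t l) else 0)) ≤ M0 := by
      calc ∑ j ∈ s1.filter (fun j => t j ≤ 1),
          (1/(t j)) * (∑' l : ℕ, (if t j ≤ t l ∧ t l ≤ t j + 1 then 1/(t l) else 0))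
          ≤ ∑ j ∈ s1.filter (fun j => t j ≤ 1), C₀/(t j)^2 := by
            apply Finset.sum_le_sum
            intro j hj
            simp only [Finset.mem_filter] at hj
            exact ha_small j hj.2
        _ ≤ ∑ j ∈ F, C₀/(t j)^2 := by
            apply Finset.sum_le_sum_of_subset_of_nonneg
            · intro j hj
              simp only [Finset.mem_filter] at hj
              rw [hF, Set.Finite.mem_toFinset]
              simp only [Set.mem_setOf_eq]
              linarith [hj.2]
            · intro j _ _
              have := hpos j
              positivity
        _ = M0 := rfl
    have hpart2 : ∑ j ∈ s1.filter (fun j => ¬ t j ≤ 1),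
        (1/(t j)) * (∑' l : ℕ, (if t j ≤ t l ∧ t l ≤ t j + 1 then 1/(t l) else 0))
        ≤ C₀^2 * δ⁻¹ := by
      set s2 := s1.filter (fun j => ¬ t j ≤ 1) with hs2
      have hmem : ∀ j ∈ s2, 1 < t j ∧ t j ≤ δ⁻¹ := by
        intro j hj
        rw [hs2, Finset.mem_filter] at hj
        have hj1 := hj.1
        rw [hs1, Finset.mem_filter] at hj1
        exact ⟨not_le.mp hj.2, hj1.2⟩
      calc ∑ j ∈ s2, (1/(t j)) * (∑' l : ℕ, (if t j ≤ t l ∧ t l ≤ t j + 1 then 1/(t l) else 0))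
          ≤ ∑ j ∈ s2, C₀ * (1/((⌊t j⌋₊ : ℕ) : ℝ)) := by
            apply Finset.sum_le_sum
            intro j hj
            exact ha_big j (hmem j hj).1
        _ = ∑ k ∈ s2.image (fun j => ⌊t j⌋₊),
              (s2.filter (fun j => ⌊t j⌋₊ = k)).card • (C₀ * (1/(k:ℝ))) :=
            Finset.sum_comp (fun k : ℕ => C₀ * (1/(k:ℝ))) (fun j => ⌊t j⌋₊)
        _ ≤ ∑ _k ∈ s2.image (fun j => ⌊t j⌋₊), C₀^2 := by
            apply Finset.sum_le_sum
            intro k hk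
            obtain ⟨j0, hj0, hj0k⟩ := Finset.mem_image.mp hk
            have hk1 : 1 ≤ k := by
              rw [← hj0k]
              exact Nat.le_floor (by exact_mod_cast (hmem j0 hj0).1.le)
            have hkR : (1:ℝ) ≤ (k:ℝ) := by exact_mod_cast hk1
            have hkne : (k:ℝ) ≠ 0 := by linarith
            rw [nsmul_eq_mul]
            have hcard := hfiber k hk1 (s2.filter (fun j => ⌊t j⌋₊ = k)) ?_
            · calc ((s2.filter (fun j => ⌊t j⌋₊ = k)).card : ℝ) * (C₀ * (1/(k:ℝ)))
                  ≤ (C₀ * k) * (C₀ * (1/(k:ℝ))) := by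
                    apply mul_le_mul_of_nonneg_right hcard
                    positivity
                _ = C₀^2 := by field_simp
            · intro j hj
              rw [Finset.mem_filter] at hj
              have h1 := (hmem j hj.1).1
              constructor
              · rw [← hj.2]
                exact Nat.floor_le (hpos j).le
              · rw [← hj.2]
                exact (Nat.lt_floor_add_one (t j)).le
        _ = ((s2.image (fun j => ⌊t j⌋₊)).card : ℝ) * C₀^2 := by
            rw [Finset.sum_const, nsmul_eq_mul]
        _ ≤ (N : ℝ) * C₀^2 := by
            apply mul_le_mul_of_nonneg_right _ (by positivity)
            have hsub : s2.image (fun j => ⌊t j⌋₊) ⊆ Finset.Icc 1 N := by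
              intro k hk
              obtain ⟨j0, hj0, hj0k⟩ := Finset.mem_image.mp hk
              rw [Finset.mem_Icc]
              constructor
              · rw [← hj0k]
                exact Nat.le_floor (by exact_mod_cast (hmem j0 hj0).1.le)
              · rw [← hj0k, hNdef]
                exact Nat.floor_le_floor (hmem j0 hj0).2
            have := Finset.card_le_card hsub
            rw [Nat.card_Icc] at this
            exact_mod_cast le_trans this (by omega)
        _ ≤ C₀^2 * δ⁻¹ := by
            rw [mul_comm]
            exact mul_le_mul_of_nonneg_left hNle (by positivity)
    linarith
  -- second sum
  have hT2 : (∑' j : ℕ, if δ⁻¹ < t j then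
      (1/(t j)^2) * ∑' l : ℕ, (if t j ≤ t l ∧ t l ≤ t j + 1 then 1/(t l)^2 else 0)
      else 0) ≤ C₀^2 * (2*δ) := by
    apply tsum_le_of_sum_le' (by positivity)
    intro s
    rw [← Finset.sum_filter]
    set s2 := s.filter (fun j => δ⁻¹ < t j) with hs2
    have hmem : ∀ j ∈ s2, δ⁻¹ < t j := by
      intro j hj
      rw [hs2, Finset.mem_filter] at hj
      exact hj.2
    have hmem1 : ∀ j ∈ s2, 1 < t j := fun j hj => by linarith [hmem j hj]
    have hmemN : ∀ j ∈ s2, N ≤ ⌊t j⌋₊ := fun j hj => Nat.floor_le_floor (hmem j hj).le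
    calc ∑ j ∈ s2, (1/(t j)^2) * (∑' l : ℕ, (if t j ≤ t l ∧ t l ≤ t j + 1 then 1/(t l)^2 else 0))
        ≤ ∑ j ∈ s2, C₀ * (1/((⌊t j⌋₊ : ℕ) : ℝ)^3) := by
          apply Finset.sum_le_sum
          intro j hj
          exact hb_big j (hmem1 j hj)
      _ = ∑ k ∈ s2.image (fun j => ⌊t j⌋₊),
            (s2.filter (fun j => ⌊t j⌋₊ = k)).card • (C₀ * (1/(k:ℝ)^3)) :=
          Finset.sum_comp (fun k : ℕ => C₀ * (1/(k:ℝ)^3)) (fun j => ⌊t j⌋₊)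
      _ ≤ ∑ k ∈ s2.image (fun j => ⌊t j⌋₊), C₀^2 * (1/(k:ℝ)^2) := by
          apply Finset.sum_le_sum
          intro k hk
          obtain ⟨j0, hj0, hj0k⟩ := Finset.mem_image.mp hk
          have hk1 : 1 ≤ k := by
            rw [← hj0k]
            exact Nat.le_floor (by exact_mod_cast (hmem1 j0 hj0).le)
          have hkR : (1:ℝ) ≤ (k:ℝ) := by exact_mod_cast hk1
          have hkne : (k:ℝ) ≠ 0 := by linarith
          rw [nsmul_eq_mul]
          have hcard := hfiber k hk1 (s2.filter (fun j => ⌊t j⌋₊ = k)) ?_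
          · calc ((s2.filter (fun j => ⌊t j⌋₊ = k)).card : ℝ) * (C₀ * (1/(k:ℝ)^3))
                ≤ (C₀ * k) * (C₀ * (1/(k:ℝ)^3)) := by
                  apply mul_le_mul_of_nonneg_right hcard
                  positivity
              _ = C₀^2 * (1/(k:ℝ)^2) := by field_simp
          · intro j hj
            rw [Finset.mem_filter] at hj
            constructor
            · rw [← hj.2]
              exact Nat.floor_le (hpos j).le
            · rw [← hj.2]
              exact (Nat.lt_floor_add_one (t j)).le
      _ = C₀^2 * ∑ k ∈ s2.image (fun j => ⌊t j⌋₊), 1/(k:ℝ)^2 := by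
          rw [Finset.mul_sum]
      _ ≤ C₀^2 * ∑ k ∈ Finset.Icc N ((s2.image (fun j => ⌊t j⌋₊)).sup id), 1/(k:ℝ)^2 := by
          apply mul_le_mul_of_nonneg_left _ (by positivity)
          apply Finset.sum_le_sum_of_subset_of_nonneg
          · intro k hk
            obtain ⟨j0, hj0, hj0k⟩ := Finset.mem_image.mp hk
            rw [Finset.mem_Icc]
            refine ⟨by rw [← hj0k]; exact hmemN j0 hj0, ?_⟩
            exact Finset.le_sup (f := id) hk
          · intro k _ _
            positivity
      _ ≤ C₀^2 * (1/((N:ℝ)-1)) := by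
          apply mul_le_mul_of_nonneg_left _ (by positivity)
          exact aux_sumsq N _ (by omega)
      _ ≤ C₀^2 * (2*δ) := by
          apply mul_le_mul_of_nonneg_left _ (by positivity)
          rw [div_le_iff₀ (by linarith)]
          have hdd : δ * δ⁻¹ = 1 := mul_inv_cancel₀ hδne
          nlinarith
  -- conclusion
  have hsq : (0:ℝ) ≤ δ⁻¹^2 := by positivity
  have key : δ⁻¹^2 * (C₀^2 * (2*δ)) = 2*C₀^2*δ⁻¹ := by
    field_simp
  calc (∑' j : ℕ, if t j ≤ δ⁻¹ then
          (1/(t j)) * ∑' l : ℕ, (if t j ≤ t l ∧ t l ≤ t j + 1 then 1/(t l) else 0)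
        else 0)
      + δ⁻¹^2 * (∑' j : ℕ, if δ⁻¹ < t j then
          (1/(t j)^2) * ∑' l : ℕ, (if t j ≤ t l ∧ t l ≤ t j + 1 then 1/(t l)^2 else 0)
        else 0)
      ≤ (M0 + C₀^2 * δ⁻¹) + δ⁻¹^2 * (C₀^2 * (2*δ)) := by
        apply add_le_add hT1
        apply mul_le_mul_of_nonneg_left _ hsq
        exact hT2
    _ = M0 + C₀^2 * δ⁻¹ + 2*C₀^2*δ⁻¹ := by rw [key]
    _ ≤ (M0 + 3*C₀^2) * δ⁻¹ := by nlinarith [mul_nonneg hM0 (by linarith : (0:ℝ) ≤ δ⁻¹ - 1)]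
    _ = (M0 + 3*C₀^2) / δ := by rw [div_eq_mul_inv]
end
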